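/- For all nonnegative integers n and integers k, the Bernoulli polynomials of order k satisfy B_n^{(k)}(x) = ∑_{ℓ=0}^n S(n,ℓ) D_ℓ^{(k)}(x), where S(n,ℓ) are Stirling numbers of the second kind and D_ℓ^{(k)}(x) are the higher-order Daehee polynomials. -/

import Mathlib

open Nat

/-- `log(1+t)` as a formal power series with coefficients in `ℚ[x]`. -/
noncomputable def logOneAddP : PowerSeries (Polynomial ℚ) :=
  PowerSeries.mk fun n => if n = 0 then 0 else Polynomial.C ((-1 : ℚ) ^ (n + 1) / n)

/-- `(1+t)^x = ∑_n (x)_n t^n / n!` as a formal power series with coefficients in `ℚ[x]`. -/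
noncomputable def onePlusTPowX : PowerSeries (Polynomial ℚ) :=
  PowerSeries.mk fun n => Polynomial.C ((n ! : ℚ)⁻¹) * descPochhammer ℚ n

/-- `e^t = ∑_n t^n / n!` as a formal power series with coefficients in `ℚ[x]`. -/
noncomputable def expT : PowerSeries (Polynomial ℚ) :=
  PowerSeries.mk fun n => Polynomial.C ((n ! : ℚ)⁻¹)

/-- `e^{xt} = ∑_n x^n t^n / n!` as a formal power series with coefficients in `ℚ[x]`. -/
noncomputable def expXT : PowerSeries (Polynomial ℚ) :=
  PowerSeries.mk fun n => Polynomial.C ((n ! : ℚ)⁻¹) * Polynomial.X ^ n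

/-!
Substituting `t ↦ e^t - 1` is a ring endomorphism `σ` of `ℚ[x]⟦t⟧`. Comparing derivatives,
`σ (log (1 + t)) = t`, so `σ` maps `log(1+t)/t` to `t/(e^t-1)`; and `σ ((1+t)^x)` and `e^{xt}`
both solve `F' = x F`, `F(0) = 1`, so they agree. Hence `σ` maps the Daehee generating function
`(log(1+t)/t)^k (1+t)^x` to the Bernoulli one `(t/(e^t-1))^k e^{xt}`.
On coefficients, `σ (∑ a_ℓ t^ℓ/ℓ!) = ∑_n (∑_ℓ S(n,ℓ) a_ℓ) t^n/n!` because
`(e^t-1)^ℓ/ℓ! = ∑_n S(n,ℓ) t^n/n!`; this last identity is the coefficient of `t^n` in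
`σ ((1+t)^x) = e^{xt}`, written in the basis of falling factorials `(x)_ℓ`.
-/

open PowerSeries

namespace PowerSeries

theorem coeff_subst_eq_sum_range {A : Type*} [CommRing A] {f g : A⟦X⟧}
    (hg : constantCoeff g = 0) (n : ℕ) :
    coeff n (f.subst g) = ∑ d ∈ Finset.range (n + 1), coeff d f * coeff n (g ^ d) := by
  rw [coeff_subst' (HasSubst.of_constantCoeff_zero' hg)]
  refine finsum_eq_sum_of_support_subset _ fun d hd => ?_
  rw [Finset.coe_range, Set.mem_Iio, Nat.lt_succ_iff]
  by_contra! hnd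
  refine hd ?_
  have : X ^ d ∣ g ^ d := pow_dvd_pow_of_dvd (X_dvd_iff.mpr hg) d
  simp only [X_pow_dvd_iff.mp this n hnd, smul_zero]

theorem eq_of_derivative_eq_C_mul {A : Type*} [CommRing A] [IsAddTorsionFree A] (c : A)
    {f g : A⟦X⟧} (hf : d⁄dX A f = C c * f) (hg : d⁄dX A g = C c * g)
    (h0 : constantCoeff f = constantCoeff g) : f = g := by
  ext n : 1
  induction n with
  | zero => simpa using h0
  | succ n ih =>
    have hfg : (n + 1) • coeff (n + 1) f = (n + 1) • coeff (n + 1) g := by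
      have hf' := congrArg (coeff n) hf
      have hg' := congrArg (coeff n) hg
      rw [coeff_derivative, coeff_C_mul] at hf' hg'
      rw [nsmul_eq_mul, nsmul_eq_mul]
      push_cast
      linear_combination hf' - hg' + c * ih
    exact (smul_right_inj n.succ_ne_zero).mp hfg

variable {A : Type*} [CommRing A] [Algebra ℚ A]

theorem one_add_X_mul_deriv_log : (1 + X) * d⁄dX A (log A) = 1 := by
  ext n : 1
  rw [deriv_log, add_mul, one_mul, map_add]
  cases n with
  | zero => simp
  | succ n =>
    rw [coeff_succ_X_mul]
    simp [pow_succ]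

theorem log_subst_exp_sub_one [IsAddTorsionFree A] : (log A).subst (exp A - 1) = X := by
  have hE := HasSubst.exp_sub_one (A := A)
  refine derivative.ext ?_ ?_
  · have h := congrArg (subst (exp A - 1)) (one_add_X_mul_deriv_log (A := A))
    rw [subst_mul hE, subst_add hE, subst_X hE, ← coe_substAlgHom hE, map_one,
      add_sub_cancel] at h
    rw [derivative_subst hE, map_sub, derivative_exp, derivative_one, sub_zero, derivative_X,
      mul_comm, ← coe_substAlgHom hE, h]
  · rw [constantCoeff_X]
    refine constantCoeff_subst_eq_zero ?_ _ constantCoeff_log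
    rw [map_sub, map_one, ← constantCoeff_eq, constantCoeff_exp, sub_self]

theorem coeff_exp_sub_one_pow (n ℓ : ℕ) :
    coeff n ((exp A - 1) ^ ℓ) = algebraMap ℚ A (coeff n ((exp ℚ - 1) ^ ℓ)) := by
  rw [← map_exp (algebraMap ℚ A), ← map_one (map (algebraMap ℚ A)), ← map_sub, ← map_pow,
    coeff_map]

end PowerSeries

open scoped Polynomial

theorem logOneAddP_eq_log : logOneAddP = log ℚ[X] := by
  ext n
  simp [logOneAddP, Polynomial.algebraMap_eq]

theorem expT_eq_exp : expT = exp ℚ[X] := by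
  ext n
  simp [expT, Polynomial.algebraMap_eq]

theorem C_inv_factorial_succ_mul (n : ℕ) :
    Polynomial.C ((n + 1)! : ℚ)⁻¹ * (n + 1) = Polynomial.C (n ! : ℚ)⁻¹ := by
  rw [← Nat.cast_succ, ← map_natCast Polynomial.C, ← map_mul, factorial_succ, Nat.cast_mul,
    mul_inv, mul_comm, ← mul_assoc, mul_inv_cancel₀ (by positivity), one_mul]

theorem derivative_expXT : d⁄dX ℚ[X] expXT = C Polynomial.X * expXT := by
  ext n : 1
  rw [coeff_derivative, coeff_C_mul, expXT, coeff_mk, coeff_mk, mul_right_comm,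
    C_inv_factorial_succ_mul, pow_succ]
  ring

theorem one_add_X_mul_derivative_onePlusTPowX :
    (1 + X) * d⁄dX ℚ[X] onePlusTPowX = C Polynomial.X * onePlusTPowX := by
  ext n : 1
  rw [add_mul, one_mul, map_add, coeff_C_mul, coeff_derivative, onePlusTPowX,
    coeff_mk, coeff_mk, mul_right_comm, C_inv_factorial_succ_mul, descPochhammer_succ_right]
  cases n with
  | zero => simp
  | succ n =>
    rw [coeff_succ_X_mul, coeff_derivative, coeff_mk]
    push_cast
    ring

theorem onePlusTPowX_subst_exp_sub_one : onePlusTPowX.subst (exp ℚ[X] - 1) = expXT := by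
  have hE := HasSubst.exp_sub_one (A := ℚ[X])
  refine eq_of_derivative_eq_C_mul Polynomial.X ?_ derivative_expXT ?_
  · have h := congrArg (subst (exp ℚ[X] - 1)) one_add_X_mul_derivative_onePlusTPowX
    rw [subst_mul hE, subst_add hE, subst_X hE, ← coe_substAlgHom hE, map_one, add_sub_cancel,
      coe_substAlgHom, subst_mul hE, subst_C] at h
    rw [derivative_subst hE, map_sub, derivative_exp, derivative_one, sub_zero, mul_comm, h]
    rfl
  · rw [← coeff_zero_eq_constantCoeff_apply, ← coeff_zero_eq_constantCoeff_apply,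
      coeff_subst_eq_sum_range (by simp)]
    simp [onePlusTPowX, expXT]

noncomputable def descPochhammerSeq (R : Type*) [Ring R] [NoZeroDivisors R] [Nontrivial R] :
    Polynomial.Sequence R where
  elems' := descPochhammer R
  degree_eq' n := by
    rw [Polynomial.degree_eq_natDegree (monic_descPochhammer R n).ne_zero, descPochhammer_natDegree]

theorem eq_of_sum_C_mul_descPochhammer_eq {R : Type*} [CommRing R] [IsDomain R] {N : ℕ}
    {a b : ℕ → R}
    (h : ∑ ℓ ∈ Finset.range N, Polynomial.C (a ℓ) * descPochhammer R ℓ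
      = ∑ ℓ ∈ Finset.range N, Polynomial.C (b ℓ) * descPochhammer R ℓ) :
    ∀ ℓ < N, a ℓ = b ℓ := by
  intro ℓ hℓ
  refine sub_eq_zero.mp <| linearIndependent_iff'.mp (descPochhammerSeq R).linearIndependent
    (Finset.range N) (a - b) ?_ ℓ (Finset.mem_range.mpr hℓ)
  simp only [Pi.sub_apply, sub_smul, Finset.sum_sub_distrib, Polynomial.smul_eq_C_mul]
  exact sub_eq_zero.mpr h

theorem inv_factorial_mul_coeff_exp_sub_one_pow {S : ℕ → ℕ → ℚ}
    (hS : ∀ N : ℕ, (Polynomial.X : ℚ[X]) ^ N =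
      ∑ ℓ ∈ Finset.range (N + 1), Polynomial.C (S N ℓ) * descPochhammer ℚ ℓ)
    {n ℓ : ℕ} (hℓ : ℓ ≤ n) :
    (ℓ ! : ℚ)⁻¹ * coeff n ((exp ℚ - 1) ^ ℓ) = (n ! : ℚ)⁻¹ * S n ℓ := by
  have h := congrArg (coeff n) onePlusTPowX_subst_exp_sub_one
  rw [coeff_subst_eq_sum_range (by simp), expXT, coeff_mk, hS, Finset.mul_sum] at h
  simp only [onePlusTPowX, coeff_mk, coeff_exp_sub_one_pow (A := ℚ[X]),
    Polynomial.algebraMap_eq] at h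
  refine eq_of_sum_C_mul_descPochhammer_eq (N := n + 1)
    (a := fun ℓ => (ℓ ! : ℚ)⁻¹ * coeff n ((exp ℚ - 1) ^ ℓ)) (b := fun ℓ => (n ! : ℚ)⁻¹ * S n ℓ)
    ?_ ℓ (Nat.lt_succ_of_le hℓ)
  convert h using 2 with m _ m _ <;> rw [map_mul] <;> ring

theorem coeff_subst_exp_sub_one_of_coeff_eq {S : ℕ → ℕ → ℚ}
    (hS : ∀ N : ℕ, (Polynomial.X : ℚ[X]) ^ N =
      ∑ ℓ ∈ Finset.range (N + 1), Polynomial.C (S N ℓ) * descPochhammer ℚ ℓ)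
    {f : ℚ[X]⟦X⟧} {a : ℕ → ℚ[X]}
    (hf : ∀ ℓ, coeff ℓ f = Polynomial.C (ℓ ! : ℚ)⁻¹ * a ℓ) (n : ℕ) :
    coeff n (f.subst (exp ℚ[X] - 1))
      = Polynomial.C (n ! : ℚ)⁻¹ * ∑ ℓ ∈ Finset.range (n + 1), Polynomial.C (S n ℓ) * a ℓ := by
  rw [coeff_subst_eq_sum_range (by simp), Finset.mul_sum]
  refine Finset.sum_congr rfl fun ℓ hℓ => ?_
  rw [hf, coeff_exp_sub_one_pow, Polynomial.algebraMap_eq, mul_right_comm, ← map_mul,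
    inv_factorial_mul_coeff_exp_sub_one_pow hS (Nat.lt_succ_iff.mp (Finset.mem_range.mp hℓ)),
    map_mul]
  ring

/-- For `n ≥ 0` and `k ∈ ℤ`: if `u = log(1+t)/t` and `v = t/(e^t-1)` (as units of the ring
of power series over `ℚ[x]`), the higher-order Daehee polynomials are defined by
`(log(1+t)/t)^k (1+t)^x = ∑ D_n^{(k)}(x) t^n/n!`, the Bernoulli polynomials of order `k`
by `(t/(e^t-1))^k e^{xt} = ∑ B_n^{(k)}(x) t^n/n!`, and `s(N,ℓ)` are the signed Stirling
numbers `S(N,ℓ)` of the second kind satisfy `x^N = ∑_ℓ S(N,ℓ) (x)_ℓ`, then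
`B_n^{(k)}(x) = ∑_{ℓ=0}^n S(n,ℓ) D_ℓ^{(k)}(x)`. -/
theorem bernoulli_poly_eq_stirling2_sum_daehee_poly
    (k : ℤ) (D B : ℕ → Polynomial ℚ) (S : ℕ → ℕ → ℚ)
    (u v : (PowerSeries (Polynomial ℚ))ˣ)
    (hu : PowerSeries.X * (u : PowerSeries (Polynomial ℚ)) = logOneAddP)
    (hv : (v : PowerSeries (Polynomial ℚ)) * (expT - 1) = PowerSeries.X)
    (hD : ∀ n : ℕ, PowerSeries.coeff n
        (((u ^ k : (PowerSeries (Polynomial ℚ))ˣ) : PowerSeries (Polynomial ℚ)) * onePlusTPowX)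
        = Polynomial.C ((n ! : ℚ)⁻¹) * D n)
    (hB : ∀ n : ℕ, PowerSeries.coeff n
        (((v ^ k : (PowerSeries (Polynomial ℚ))ˣ) : PowerSeries (Polynomial ℚ)) * expXT)
        = Polynomial.C ((n ! : ℚ)⁻¹) * B n)
    (hS : ∀ N : ℕ, (Polynomial.X : Polynomial ℚ) ^ N =
      ∑ ℓ ∈ Finset.range (N + 1), Polynomial.C (S N ℓ) * descPochhammer ℚ ℓ) :
    ∀ n : ℕ, B n = ∑ ℓ ∈ Finset.range (n + 1), Polynomial.C (S n ℓ) * D ℓ := by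
  intro n
  have hE := HasSubst.exp_sub_one (A := ℚ[X])
  have hσu : (u : ℚ[X]⟦X⟧).subst (exp ℚ[X] - 1) = v := by
    have h := congrArg (subst (exp ℚ[X] - 1)) hu
    rw [subst_mul hE, subst_X hE, logOneAddP_eq_log, log_subst_exp_sub_one, ← hv, expT_eq_exp,
      mul_comm (v : ℚ[X]⟦X⟧)] at h
    exact mul_left_cancel₀ (fun h0 => by simpa using congrArg (coeff 1) h0) h
  have hσuk : ((u ^ k : ℚ[X]⟦X⟧ˣ) : ℚ[X]⟦X⟧).subst (exp ℚ[X] - 1) = (v ^ k : ℚ[X]⟦X⟧ˣ) := by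
    have hUv : Units.map (substAlgHom hE).toMonoidHom u = v :=
      Units.ext (by simpa [coe_substAlgHom] using hσu)
    rw [← hUv, ← map_zpow, Units.coe_map]
    simp [coe_substAlgHom]
  have h := coeff_subst_exp_sub_one_of_coeff_eq hS hD n
  rw [subst_mul hE, hσuk, onePlusTPowX_subst_exp_sub_one, hB] at h
  exact mul_left_cancel₀ (by simp [factorial_ne_zero]) h
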